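/- Let m ≥ 1, n ≥ 1, F : ℝ^m → ℝ^m, x ∈ ℝ^m, τ > 0 and ε ≥ 0. Let g : ℝ^m → ℝ^m satisfy ‖g(y) - (F(y) - y)/(nτ)‖ ≤ ε for all y ∈ ℝ^m. Let z : ℝ → ℝ^m be continuous on [0, nτ] with z(t) = x for all t ∈ [-nτ, 0], and suppose that for every t ∈ [0, nτ), z has right derivative g(z(τ·⌊(t - nτ)/τ⌋)) at t (derivative within [t, ∞)). Then ‖z(nτ) - F(x)‖ ≤ nτ·ε. In particular, if g(y) = (F(y) - y)/(nτ) exactly, then z(nτ) = F(x). -/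

import Mathlib

/-!
On `[0, nτ)` the delayed time `τ⌊(t - nτ)/τ⌋` stays in the constant initial history, so the
equation degenerates to `z' = g x`. Hence `z (nτ) = x + nτ • g x`, and
`z (nτ) - F x = nτ • (g x - (nτ)⁻¹ • (F x - x))`, which is at most `nτ ε` in norm.
-/

open Set

theorem mul_floor_sub_div_mem_Icc {τ t : ℝ} (hτ : 0 < τ) (n : ℕ) (ht : t ∈ Ico 0 (n * τ)) :
    τ * ⌊(t - n * τ) / τ⌋ ∈ Icc (-(n * τ)) (-τ) := by
  have hshift : (t - n * τ) / τ = t / τ - n := by field_simp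
  have hk0 : 0 ≤ ⌊t / τ⌋ := Int.floor_nonneg.mpr (div_nonneg ht.1 hτ.le)
  have hkn : ⌊t / τ⌋ < n := Int.floor_lt.mpr (by rw [div_lt_iff₀ hτ]; exact_mod_cast ht.2)
  have hk0' : (0 : ℝ) ≤ ⌊t / τ⌋ := by exact_mod_cast hk0
  have hkn' : (⌊t / τ⌋ : ℝ) + 1 ≤ n := by exact_mod_cast hkn
  rw [hshift, Int.floor_sub_natCast]
  push_cast
  constructor <;> nlinarith

theorem eq_add_sub_smul_of_hasDerivWithinAt_Ici_const {E : Type*} [NormedAddCommGroup E]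
    [NormedSpace ℝ E] {z : ℝ → E} {v : E} {a b : ℝ} (hab : a ≤ b)
    (hzc : ContinuousOn z (Icc a b))
    (hz' : ∀ t ∈ Ico a b, HasDerivWithinAt z v (Ici t) t) :
    z b = z a + (b - a) • v := by
  have hline : ∀ t, HasDerivWithinAt (fun s : ℝ => z a + (s - a) • v) v (Ici t) t := fun t => by
    simpa using (((hasDerivAt_id t).sub_const a).smul_const v).const_add (z a) |>.hasDerivWithinAt
  exact eq_of_has_deriv_right_eq hz' (fun t _ => hline t) hzc (by fun_prop) (by simp) b
    ⟨hab, le_rfl⟩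

theorem npcdde_general_universal_approximation_general
    (m : ℕ) (n : ℕ) (hn : 1 ≤ n)
    (F : EuclideanSpace ℝ (Fin m) → EuclideanSpace ℝ (Fin m))
    (x : EuclideanSpace ℝ (Fin m)) (τ : ℝ) (hτ : 0 < τ) (ε : ℝ)
    (g : EuclideanSpace ℝ (Fin m) → EuclideanSpace ℝ (Fin m))
    (hg : ∀ y, ‖g y - (n * τ)⁻¹ • (F y - y)‖ ≤ ε)
    (z : ℝ → EuclideanSpace ℝ (Fin m))
    (hzc : ContinuousOn z (Set.Icc 0 (n * τ)))
    (hz0 : ∀ t ∈ Set.Icc (-(n * τ)) 0, z t = x)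
    (hz' : ∀ t ∈ Set.Ico 0 (n * τ),
      HasDerivWithinAt z (g (z (τ * ↑⌊(t - n * τ) / τ⌋))) (Set.Ici t) t) :
    ‖z (n * τ) - F x‖ ≤ n * τ * ε ∧
      ((∀ y, g y = (n * τ)⁻¹ • (F y - y)) → z (n * τ) = F x) := by
  set T : ℝ := n * τ
  have hT : 0 < T := mul_pos (by exact_mod_cast hn) hτ
  have hdelay : ∀ t ∈ Ico 0 T, z (τ * ⌊(t - T) / τ⌋) = x := fun t ht =>
    hz0 _ (Icc_subset_Icc_right (by linarith) (mul_floor_sub_div_mem_Icc hτ n ht))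
  have hzT : z T = x + T • g x := by
    have := eq_add_sub_smul_of_hasDerivWithinAt_Ici_const hT.le hzc
      (fun t ht => hdelay t ht ▸ hz' t ht)
    rwa [hz0 0 ⟨by linarith, le_rfl⟩, sub_zero] at this
  have herr : z T - F x = T • (g x - T⁻¹ • (F x - x)) := by
    rw [hzT, smul_sub, smul_inv_smul₀ hT.ne']
    module
  refine ⟨?_, fun hexact => ?_⟩
  · rw [herr, norm_smul, Real.norm_of_nonneg hT.le]
    exact mul_le_mul_of_nonneg_left (hg x) hT.le
  · rw [← sub_eq_zero, herr, hexact, sub_self, smul_zero]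

theorem npcdde_general_universal_approximation
    (m : ℕ) (hm : 1 ≤ m) (n : ℕ) (hn : 1 ≤ n)
    (F : EuclideanSpace ℝ (Fin m) → EuclideanSpace ℝ (Fin m))
    (x : EuclideanSpace ℝ (Fin m)) (τ : ℝ) (hτ : 0 < τ) (ε : ℝ) (hε : 0 ≤ ε)
    (g : EuclideanSpace ℝ (Fin m) → EuclideanSpace ℝ (Fin m))
    (hg : ∀ y, ‖g y - (n * τ)⁻¹ • (F y - y)‖ ≤ ε)
    (z : ℝ → EuclideanSpace ℝ (Fin m))
    (hzc : ContinuousOn z (Set.Icc 0 (n * τ)))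
    (hz0 : ∀ t ∈ Set.Icc (-(n * τ)) 0, z t = x)
    (hz' : ∀ t ∈ Set.Ico 0 (n * τ),
      HasDerivWithinAt z (g (z (τ * ↑⌊(t - n * τ) / τ⌋))) (Set.Ici t) t) :
    ‖z (n * τ) - F x‖ ≤ n * τ * ε ∧
      ((∀ y, g y = (n * τ)⁻¹ • (F y - y)) → z (n * τ) = F x) :=
  npcdde_general_universal_approximation_general m n hn F x τ hτ ε g hg z hzc hz0 hz'
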